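/- arXiv:2506.09776 — 2 statements merged into one kernel-verified Lean document; each statement's English description precedes it below -/
import Mathlib

section
/- Let Σ, Σ̂ be n×n positive semidefinite symmetric matrices with Gelbrich distance G(Σ, Σ̂) ≤ ε, where G(Σ, Σ̂) = sqrt(tr(Σ + Σ̂ − 2(Σ̂^{1/2} Σ Σ̂^{1/2})^{1/2})). Then λ_max(Σ)^{1/2} ≤ λ_max(Σ̂)^{1/2} + ε. -/
open Matrix

open scoped ComplexOrder in
/-- The positive semidefinite square root of a positive semidefinite matrix
(the definition `Matrix.PosSemidef.sqrt` of the older Mathlib, since removed). -/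
noncomputable def Matrix.PosSemidef.sqrt {n : Type*} [Fintype n] [DecidableEq n] {𝕜 : Type*}
    [RCLike 𝕜] {A : Matrix n n 𝕜} (hA : A.PosSemidef) : Matrix n n 𝕜 :=
  hA.1.eigenvectorUnitary.1 * diagonal ((↑) ∘ (√·) ∘ hA.1.eigenvalues) *
  (star hA.1.eigenvectorUnitary : Matrix n n 𝕜)

/-!
Let `Q = (Σ̂^{1/2} Σ Σ̂^{1/2})^{1/2}`. Completing the square, `(Q - T) T⁻¹ (Q - T) ⪰ 0`, gives
`2 tr Q ≤ tr (Q T⁻¹ Q) + tr T` for every `T ≻ 0`; with `T = Σ̂^{1/2} C Σ̂^{1/2}` (regularized) and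
a Schur-complement comparison this becomes the variational bound
`2 tr Q ≤ tr (Σ C⁻¹) + tr (Σ̂ C)` for every `C ≻ 0`.
For a unit eigenvector `v` of `Σ` with eigenvalue `a`, the choice `C = I + t v vᵀ` yields
`G² ≥ t/(1+t) a - t vᵀ Σ̂ v ≥ t/(1+t) a - t λ_max(Σ̂)` for all `t ≥ 0`, and optimizing over `t`
gives `G ≥ √a - √λ_max(Σ̂)`.
-/

namespace Matrix

open scoped MatrixOrder

variable {n : Type*} [Fintype n] [DecidableEq n]

lemma PosSemidef.sqrt_eq_cfc {P : Matrix n n ℝ} (hP : P.PosSemidef) :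
    hP.sqrt = cfc Real.sqrt P := by
  rw [hP.isHermitian.cfc_eq Real.sqrt]
  rfl

lemma PosSemidef.isHermitian_sqrt {P : Matrix n n ℝ} (hP : P.PosSemidef) :
    hP.sqrt.IsHermitian := by
  rw [hP.sqrt_eq_cfc]
  exact cfc_predicate _ _

lemma PosSemidef.sqrt_mul_self {P : Matrix n n ℝ} (hP : P.PosSemidef) :
    hP.sqrt * hP.sqrt = P := by
  rw [hP.sqrt_eq_cfc, ← cfc_mul ..]
  conv_rhs => rw [← cfc_id' ℝ P]
  exact cfc_congr fun x hx ↦ Real.mul_self_sqrt <|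
    spectrum_nonneg_of_nonneg (nonneg_iff_posSemidef.mpr hP) hx

lemma PosSemidef.trace_mul_le_trace_mul {A X Y : Matrix n n ℝ} (hA : A.PosSemidef)
    (h : X ≤ Y) : (A * X).trace ≤ (A * Y).trace := by
  have hR := hA.isHermitian_sqrt
  rw [← hA.sqrt_mul_self, ← trace_mul_cycle _ X, ← trace_mul_cycle _ Y]
  refine OrderHomClass.mono (tracePositiveLinearMap n ℝ ℝ) ?_
  simpa [hR.star_eq] using star_left_conjugate_le_conjugate h hA.sqrt

lemma PosSemidef.posDef_mul_mul_add_smul_one {C M : Matrix n n ℝ} (hC : C.PosSemidef)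
    (hM : M.IsHermitian) {δ : ℝ} (hδ : 0 < δ) : (M * C * M + δ • 1).PosDef := by
  refine PosDef.posSemidef_add ?_ (PosDef.one.smul hδ)
  simpa only [hM.eq] using hC.conjTranspose_mul_mul_same M

lemma mul_inv_mul_le_inv {C M : Matrix n n ℝ} (hC : C.PosDef) (hM : M.IsHermitian)
    {δ : ℝ} (hδ : 0 < δ) : M * (M * C * M + δ • 1)⁻¹ * M ≤ C⁻¹ := by
  set T := M * C * M + δ • 1
  have hT : T.PosDef := hC.posSemidef.posDef_mul_mul_add_smul_one hM hδ
  let := hT.isUnit.invertible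
  let := hC.inv.isUnit.invertible
  have hCC : C⁻¹⁻¹ = C := nonsing_inv_nonsing_inv _ ((isUnit_iff_isUnit_det C).mp hC.isUnit)
  -- The two Schur complements of this block matrix are `T - M * C * M = δ • 1` and the goal.
  have hblock : (fromBlocks T M Mᴴ C⁻¹).PosSemidef := by
    rw [PosDef.fromBlocks₂₂ _ _ hC.inv, hCC, hM.eq]
    simpa [T] using (PosDef.one.smul hδ).posSemidef
  rw [PosDef.fromBlocks₁₁ _ _ hT, hM.eq] at hblock
  exact hblock

lemma two_mul_trace_le_trace_mul_inv_mul_add_trace {Q T : Matrix n n ℝ} (hQ : Q.IsHermitian)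
    (hT : T.PosDef) : 2 * Q.trace ≤ (Q * T⁻¹ * Q).trace + T.trace := by
  have hdet : IsUnit T.det := (isUnit_iff_isUnit_det T).mp hT.isUnit
  have hsq : ((Q - T) * T⁻¹ * (Q - T)).PosSemidef := by
    simpa only [(hQ.sub hT.isHermitian).eq] using
      hT.inv.posSemidef.conjTranspose_mul_mul_same (Q - T)
  have hexpand : (Q - T) * T⁻¹ * (Q - T) = Q * T⁻¹ * Q - Q - Q + T := by
    simp only [sub_mul, mul_sub, mul_assoc, nonsing_inv_mul _ hdet, mul_one,
      mul_nonsing_inv _ hdet, one_mul]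
    abel
  have := hsq.trace_nonneg
  rw [hexpand, trace_add, trace_sub, trace_sub] at this
  linarith

lemma two_mul_trace_le_trace_mul_inv_add_trace_mul {A M Q C : Matrix n n ℝ}
    (hA : A.PosSemidef) (hM : M.IsHermitian) (hQ : Q.IsHermitian) (hQM : Q * Q = M * A * M)
    (hC : C.PosDef) : 2 * Q.trace ≤ (A * C⁻¹).trace + (M * M * C).trace := by
  -- `M * C * M` may be singular, so it is regularized by `δ • 1` with `δ → 0`.
  refine le_of_forall_pos_le_add fun ε hε ↦ ?_
  set δ := ε / (Fintype.card n + 1)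
  have hδ : 0 < δ := by positivity
  have hδε : δ * Fintype.card n ≤ ε := by
    rw [div_mul_eq_mul_div, div_le_iff₀ (by positivity)]
    nlinarith
  set T := M * C * M + δ • 1
  have hT : T.PosDef := hC.posSemidef.posDef_mul_mul_add_smul_one hM hδ
  have hQT : (Q * T⁻¹ * Q).trace = (A * (M * T⁻¹ * M)).trace := by
    rw [trace_mul_cycle, hQM]
    simp only [mul_assoc]
    rw [trace_mul_comm M]
    simp only [mul_assoc]
  have hT_trace : T.trace = (M * M * C).trace + δ * Fintype.card n := by
    simp only [T, trace_add, trace_smul, trace_one, trace_mul_cycle M C M, smul_eq_mul]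
  calc 2 * Q.trace ≤ (Q * T⁻¹ * Q).trace + T.trace :=
        two_mul_trace_le_trace_mul_inv_mul_add_trace hQ hT
    _ ≤ (A * C⁻¹).trace + ((M * M * C).trace + δ * Fintype.card n) := by
        rw [hQT, hT_trace]
        gcongr
        exact hA.trace_mul_le_trace_mul (mul_inv_mul_le_inv hC hM hδ)
    _ ≤ (A * C⁻¹).trace + (M * M * C).trace + ε := by linarith

omit [DecidableEq n] in
lemma trace_mul_vecMulVec_self (A : Matrix n n ℝ) (v : n → ℝ) :
    (A * vecMulVec v v).trace = v ⬝ᵥ A *ᵥ v := by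
  rw [mul_vecMulVec, trace_vecMulVec, dotProduct_comm]

lemma posDef_one_add_smul_vecMulVec (v : n → ℝ) {t : ℝ} (ht : 0 ≤ t) :
    (1 + t • vecMulVec v v).PosDef :=
  PosDef.one.add_posSemidef <| by simpa using (posSemidef_vecMulVec_self_star v).smul ht

lemma inv_one_add_smul_vecMulVec {v : n → ℝ} (hv : v ⬝ᵥ v = 1) {t : ℝ} (ht : 0 ≤ t) :
    (1 + t • vecMulVec v v)⁻¹ = 1 - (t / (1 + t)) • vecMulVec v v := by
  refine inv_eq_right_inv ?_
  have hvv : vecMulVec v v * vecMulVec v v = vecMulVec v v := by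
    rw [vecMulVec_mul_vecMulVec, hv, one_smul]
  have ht1 : 1 + t ≠ 0 := by positivity
  have hcoef : t - t / (1 + t) - t * (t / (1 + t)) = 0 := by
    field_simp
    ring
  calc (1 + t • vecMulVec v v) * (1 - (t / (1 + t)) • vecMulVec v v)
      = 1 + (t - t / (1 + t) - t * (t / (1 + t))) • vecMulVec v v := by
        simp only [add_mul, mul_sub, one_mul, mul_one, smul_mul_smul_comm, hvv]
        module
    _ = 1 := by rw [hcoef, zero_smul, add_zero]

lemma sub_le_trace_add_trace_sub_two_mul_trace {A B M Q : Matrix n n ℝ} (hA : A.PosSemidef)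
    (hM : M.IsHermitian) (hMB : M * M = B) (hQ : Q.IsHermitian) (hQM : Q * Q = M * A * M)
    {v : n → ℝ} (hv : v ⬝ᵥ v = 1) {t : ℝ} (ht : 0 ≤ t) :
    t / (1 + t) * (v ⬝ᵥ A *ᵥ v) - t * (v ⬝ᵥ B *ᵥ v) ≤ A.trace + B.trace - 2 * Q.trace := by
  have h := two_mul_trace_le_trace_mul_inv_add_trace_mul hA hM hQ hQM
    (posDef_one_add_smul_vecMulVec v ht)
  rw [inv_one_add_smul_vecMulVec hv ht, hMB, mul_sub, mul_add, mul_one, mul_one,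
    trace_sub, trace_add, mul_smul_comm, mul_smul_comm, trace_smul, trace_smul,
    trace_mul_vecMulVec_self, trace_mul_vecMulVec_self, smul_eq_mul, smul_eq_mul] at h
  linarith

lemma IsHermitian.dotProduct_mulVec_le_iSup_eigenvalues_mul {B : Matrix n n ℝ}
    (hB : B.IsHermitian) (v : n → ℝ) :
    v ⬝ᵥ B *ᵥ v ≤ (⨆ i, hB.eigenvalues i) * (v ⬝ᵥ v) := by
  have hle : B ≤ algebraMap ℝ _ (⨆ i, hB.eigenvalues i) := by
    refine le_algebraMap_of_spectrum_le (fun x hx ↦ ?_) hB.isSelfAdjoint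
    rw [hB.spectrum_real_eq_range_eigenvalues] at hx
    obtain ⟨i, rfl⟩ := hx
    exact le_ciSup (Set.finite_range _).bddAbove i
  have := (le_iff.mp hle).dotProduct_mulVec_nonneg v
  simpa [sub_mulVec, Algebra.algebraMap_eq_smul_one, smul_mulVec] using this

lemma IsHermitian.dotProduct_eigenvectorBasis_self {A : Matrix n n ℝ} (hA : A.IsHermitian)
    (i : n) : ⇑(hA.eigenvectorBasis i) ⬝ᵥ ⇑(hA.eigenvectorBasis i) = 1 := by
  have h := hA.eigenvectorBasis.inner_eq_one i
  rw [EuclideanSpace.inner_eq_star_dotProduct] at h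
  simpa using h

lemma IsHermitian.eigenvalues_eq_dotProduct {A : Matrix n n ℝ} (hA : A.IsHermitian) (i : n) :
    hA.eigenvalues i = ⇑(hA.eigenvectorBasis i) ⬝ᵥ A *ᵥ ⇑(hA.eigenvectorBasis i) := by
  simpa using hA.eigenvalues_eq i

end Matrix

lemma Real.sqrt_le_sqrt_add_sqrt_of_forall {a b D : ℝ} (ha : 0 ≤ a) (hb : 0 ≤ b)
    (h : ∀ t, 0 ≤ t → t / (1 + t) * a - t * b ≤ D) : √a ≤ √b + √D := by
  obtain ⟨x, hx, rfl⟩ : ∃ x, 0 ≤ x ∧ x ^ 2 = a := ⟨√a, Real.sqrt_nonneg a, Real.sq_sqrt ha⟩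
  obtain ⟨y, hy, rfl⟩ : ∃ y, 0 ≤ y ∧ y ^ 2 = b := ⟨√b, Real.sqrt_nonneg b, Real.sq_sqrt hb⟩
  rw [Real.sqrt_sq hx, Real.sqrt_sq hy, ← sub_le_iff_le_add']
  rcases le_or_gt x y with hxy | hxy
  · exact (sub_nonpos.mpr hxy).trans (Real.sqrt_nonneg D)
  refine Real.le_sqrt_of_sq_le ?_
  rcases hy.eq_or_lt with rfl | hy
  · refine le_of_forall_pos_le_add fun ε hε ↦ ?_
    have hxε : x ^ 2 - ε ≤ x ^ 2 / ε / (1 + x ^ 2 / ε) * x ^ 2 := by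
      rw [show x ^ 2 / ε / (1 + x ^ 2 / ε) = x ^ 2 / (ε + x ^ 2) by field_simp,
        div_mul_eq_mul_div, le_div_iff₀ (by positivity)]
      nlinarith [sq_nonneg ε]
    linarith [h (x ^ 2 / ε) (by positivity)]
  · have hx : 0 < x := hy.trans hxy
    -- `t = √a / √b - 1` is the optimal choice.
    have hopt : (x - y) / y / (1 + (x - y) / y) * x ^ 2 - (x - y) / y * y ^ 2 = (x - y) ^ 2 := by
      field_simp
      ring
    simpa [hopt] using h ((x - y) / y) (div_nonneg (sub_nonneg.mpr hxy.le) hy.le)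

theorem stmt_8_general {n : ℕ} (ε : ℝ) (S Shat : Matrix (Fin n) (Fin n) ℝ)
    (hS : S.PosSemidef) (hShat : Shat.PosSemidef)
    (hM : (hShat.sqrt * S * hShat.sqrt).PosSemidef)
    (hG : Real.sqrt ((S + Shat - (2 : ℝ) • hM.sqrt).trace) ≤ ε) :
    Real.sqrt (⨆ i, hS.isHermitian.eigenvalues i)
      ≤ Real.sqrt (⨆ i, hShat.isHermitian.eigenvalues i) + ε := by
  set b := ⨆ i, hShat.isHermitian.eigenvalues i
  have hb : 0 ≤ b := Real.iSup_nonneg hShat.eigenvalues_nonneg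
  have hε : 0 ≤ ε := (Real.sqrt_nonneg _).trans hG
  have hD : (S + Shat - (2 : ℝ) • hM.sqrt).trace = S.trace + Shat.trace - 2 * hM.sqrt.trace := by
    rw [trace_sub, trace_add, trace_smul, smul_eq_mul]
  have heig : ∀ i, √(hS.isHermitian.eigenvalues i) ≤ √b + ε := by
    intro i
    set v := ⇑(hS.isHermitian.eigenvectorBasis i)
    refine (Real.sqrt_le_sqrt_add_sqrt_of_forall (hS.eigenvalues_nonneg i) hb fun t ht ↦ ?_).trans
      (by gcongr)
    calc t / (1 + t) * hS.isHermitian.eigenvalues i - t * b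
        ≤ t / (1 + t) * (v ⬝ᵥ S *ᵥ v) - t * (v ⬝ᵥ Shat *ᵥ v) := by
          rw [hS.isHermitian.eigenvalues_eq_dotProduct i]
          gcongr
          simpa [v, hS.isHermitian.dotProduct_eigenvectorBasis_self] using
            hShat.isHermitian.dotProduct_mulVec_le_iSup_eigenvalues_mul v
      _ ≤ S.trace + Shat.trace - 2 * hM.sqrt.trace :=
          sub_le_trace_add_trace_sub_two_mul_trace hS hShat.isHermitian_sqrt
            hShat.sqrt_mul_self hM.isHermitian_sqrt hM.sqrt_mul_self
            (hS.isHermitian.dotProduct_eigenvectorBasis_self i) ht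
      _ = _ := hD.symm
  rw [Real.sqrt_le_iff]
  exact ⟨by positivity, Real.iSup_le (fun i ↦ (Real.sqrt_le_iff.mp (heig i)).2) (by positivity)⟩

theorem stmt_8 {n : ℕ} (ε : ℝ) (hε : 0 ≤ ε) (S Shat : Matrix (Fin n) (Fin n) ℝ)
    (hS : S.PosSemidef) (hShat : Shat.PosSemidef)
    (hM : (hShat.sqrt * S * hShat.sqrt).PosSemidef)
    (hG : Real.sqrt ((S + Shat - (2 : ℝ) • hM.sqrt).trace) ≤ ε) :
    Real.sqrt (⨆ i, hS.isHermitian.eigenvalues i)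
      ≤ Real.sqrt (⨆ i, hShat.isHermitian.eigenvalues i) + ε :=
  stmt_8_general ε S Shat hS hShat hM hG
end

section
/- Let Λ be an n×n symmetric matrix, Σ̂ a positive definite symmetric matrix, and γ > 0 such that Σ̂⁻¹ + (2/γ)Λ is positive definite. Then Σ*(γ) := (Σ̂⁻¹ + (2/γ)Λ)⁻¹ is the unique minimizer over positive definite Σ of the function F(Σ) = ⟨Λ, Σ⟩ + (γ/2)(−log det Σ + log det Σ̂ + tr(Σ Σ̂⁻¹) − n). -/
/-!
Since `Λ` is symmetric, `⟨Λ, Σ⟩ = tr (Λ Σ)`, so with `M = Σ̂⁻¹ + (2/γ) Λ` the objective is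
`(γ/2) (tr (M Σ) - log det Σ)` plus a constant. Conjugating by `√M`,
`tr (M Σ) - log det (M Σ) = ∑ (λᵢ - log λᵢ)` over the eigenvalues `λᵢ` of the positive definite
matrix `√M Σ √M`, and `λ - log λ ≥ 1` with equality only at `λ = 1`. Hence the minimum `n` is
attained exactly when `√M Σ √M = 1`, i.e. `Σ = M⁻¹`.
-/

open Matrix

/-- Frobenius inner product `⟨A, B⟩ = tr(Aᵀ B)`. -/
noncomputable def frobInner {n : ℕ} (A B : Matrix (Fin n) (Fin n) ℝ) : ℝ :=
  (Aᵀ * B).trace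

/-- The Lagrangian objective of the KL linear minimization oracle. -/
noncomputable def Ffun {n : ℕ} (Λ Shat : Matrix (Fin n) (Fin n) ℝ) (γ : ℝ)
    (S : Matrix (Fin n) (Fin n) ℝ) : ℝ :=
  frobInner Λ S
    + (γ / 2) * (-(Real.log S.det) + Real.log Shat.det + (S * Shat⁻¹).trace - n)

namespace Matrix

variable {ι : Type*} [Fintype ι] [DecidableEq ι]

lemma IsHermitian.eq_one_of_eigenvalues_eq_one {𝕜 : Type*} [RCLike 𝕜] {A : Matrix ι ι 𝕜}
    (hA : A.IsHermitian) (h : ∀ i, hA.eigenvalues i = 1) : A = 1 := by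
  rw [hA.spectral_theorem, show RCLike.ofReal ∘ hA.eigenvalues = fun _ ↦ (1 : 𝕜) by
    ext i; simp [h i], diagonal_one, map_one]

lemma PosDef.card_lt_trace_sub_log_det {A : Matrix ι ι ℝ} (hA : A.PosDef) (hne : A ≠ 1) :
    (Fintype.card ι : ℝ) < A.trace - Real.log A.det := by
  have hpos := hA.eigenvalues_pos
  obtain ⟨j, hj⟩ : ∃ j, hA.1.eigenvalues j ≠ 1 := by
    by_contra! h
    exact hne (hA.1.eq_one_of_eigenvalues_eq_one h)
  have hlog : Real.log A.det = ∑ i, Real.log (hA.1.eigenvalues i) := by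
    simp only [hA.1.det_eq_prod_eigenvalues, RCLike.ofReal_real_eq_id, id_eq,
      Real.log_prod fun i _ ↦ (hpos i).ne']
  simp only [hA.1.trace_eq_sum_eigenvalues, RCLike.ofReal_real_eq_id, id_eq, hlog,
    ← Finset.sum_sub_distrib, Fintype.card_eq_sum_ones, Nat.cast_sum, Nat.cast_one]
  refine Finset.sum_lt_sum (fun i _ ↦ ?_) ⟨j, Finset.mem_univ j, ?_⟩
  · linarith [Real.log_le_sub_one_of_pos (hpos i)]
  · linarith [Real.log_lt_sub_one_of_pos (hpos j) hj]

open scoped MatrixOrder in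
lemma PosDef.card_lt_trace_mul_sub_log_det_mul {M S : Matrix ι ι ℝ} (hM : M.PosDef)
    (hS : S.PosDef) (hne : S ≠ M⁻¹) :
    (Fintype.card ι : ℝ) < (M * S).trace - Real.log (M * S).det := by
  set R := CFC.sqrt M
  have hRR : R * R = M := CFC.sqrt_mul_sqrt_self M hM.posSemidef.nonneg
  have hRH : Rᴴ = R := (CFC.sqrt_nonneg M).posSemidef.1
  have hRu : IsUnit R := isUnit_of_mul_isUnit_left (hRR ▸ hM.isUnit)
  have hA : (R * S * R).PosDef := by
    simpa only [hRH] using hS.conjTranspose_mul_mul_same (mulVec_injective_iff_isUnit.mpr hRu)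
  have hAne : R * S * R ≠ 1 := by
    intro h1
    refine hne (inv_eq_right_inv ?_).symm
    let := hRu.invertible
    rw [← hRR, Matrix.mul_assoc, ← inv_eq_left_inv h1, mul_inv_of_invertible]
  have htr : (R * S * R).trace = (M * S).trace := by rw [trace_mul_cycle, hRR]
  have hdet : (R * S * R).det = (M * S).det := by
    rw [← hRR]; simp only [det_mul]; ring
  simpa only [htr, hdet] using hA.card_lt_trace_sub_log_det hAne

lemma PosDef.trace_mul_inv_sub_log_det_inv_lt {M S : Matrix ι ι ℝ} (hM : M.PosDef)
    (hS : S.PosDef) (hne : S ≠ M⁻¹) :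
    (M * M⁻¹).trace - Real.log M⁻¹.det < (M * S).trace - Real.log S.det := by
  have hM0 : M.det ≠ 0 := hM.det_pos.ne'
  have hlt := hM.card_lt_trace_mul_sub_log_det_mul hS hne
  rw [det_mul, Real.log_mul hM0 hS.det_pos.ne'] at hlt
  rw [mul_nonsing_inv M hM0.isUnit, trace_one, det_nonsing_inv, Ring.inverse_eq_inv',
    Real.log_inv]
  linarith

end Matrix

lemma Ffun_eq_trace_mul_sub_log_det {n : ℕ} {Λ : Matrix (Fin n) (Fin n) ℝ}
    (Shat : Matrix (Fin n) (Fin n) ℝ) (hΛ : Λᵀ = Λ) {γ : ℝ} (hγ : γ ≠ 0)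
    (T : Matrix (Fin n) (Fin n) ℝ) :
    Ffun Λ Shat γ T = γ / 2 * (((Shat⁻¹ + (2 / γ) • Λ) * T).trace - Real.log T.det)
      + γ / 2 * (Real.log Shat.det - n) := by
  rw [Ffun, frobInner, hΛ, add_mul, trace_add, smul_mul_assoc, trace_smul, smul_eq_mul,
    trace_mul_comm T]
  field_simp
  ring

theorem stmt_13_general {n : ℕ} (Λ Shat : Matrix (Fin n) (Fin n) ℝ)
    (hΛ : Λᵀ = Λ) (γ : ℝ) (hγ : 0 < γ)
    (hP : (Shat⁻¹ + (2 / γ) • Λ).PosDef) :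
    ((Shat⁻¹ + (2 / γ) • Λ)⁻¹).PosDef ∧
    ∀ S : Matrix (Fin n) (Fin n) ℝ, S.PosDef → S ≠ (Shat⁻¹ + (2 / γ) • Λ)⁻¹ →
      Ffun Λ Shat γ ((Shat⁻¹ + (2 / γ) • Λ)⁻¹) < Ffun Λ Shat γ S := by
  refine ⟨hP.inv, fun S hS hne ↦ ?_⟩
  simp only [Ffun_eq_trace_mul_sub_log_det Shat hΛ hγ.ne']
  gcongr γ / 2 * ?_ + _
  exact hP.trace_mul_inv_sub_log_det_inv_lt hS hne

theorem stmt_13 {n : ℕ} (Λ Shat : Matrix (Fin n) (Fin n) ℝ)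
    (hΛ : Λᵀ = Λ) (hShat : Shat.PosDef) (γ : ℝ) (hγ : 0 < γ)
    (hP : (Shat⁻¹ + (2 / γ) • Λ).PosDef) :
    ((Shat⁻¹ + (2 / γ) • Λ)⁻¹).PosDef ∧
    ∀ S : Matrix (Fin n) (Fin n) ℝ, S.PosDef → S ≠ (Shat⁻¹ + (2 / γ) • Λ)⁻¹ →
      Ffun Λ Shat γ ((Shat⁻¹ + (2 / γ) • Λ)⁻¹) < Ffun Λ Shat γ S :=
  stmt_13_general Λ Shat hΛ γ hγ hP
end
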